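/- Suppose f is an FGN contract with Σ_{i∈S} f_i(S) < 1 for all S ⊆ [n], and p ∈ (0,1)^n satisfies c_i'(p_i) = E_p[f_i(S)|i∈S] for all i, where each c_i' is continuous and strictly increasing. Then there exists ε > 0 and scaling factors t_i > 0 such that the contract g with g_i(S) = t_i·f_i(S) satisfies Σ_{i∈S} g_i(S) ≤ 1 for all S and c_i'(p_i + ε) = E_{p+ε·1}[g_i(S)|i∈S] for all i; in particular p is dominated by an equilibrium of a feasible contract. -/
import Mathlib


open Finset

/-- Expected reward of agent `i` conditional on `i` succeeding. -/
noncomputable def EIn {n : ℕ} (p : Fin n → ℝ) (f : Finset (Fin n) → ℝ) (i : Fin n) : ℝ :=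
  ∑ T ∈ (Finset.univ.erase i).powerset,
    f (insert i T) * ((∏ j ∈ T, p j) * ∏ j ∈ (Finset.univ.erase i) \ T, (1 - p j))

lemma EIn_smul {n : ℕ} (p : Fin n → ℝ) (f : Finset (Fin n) → ℝ) (i : Fin n) (t : ℝ) :
    EIn p (fun S => t * f S) i = t * EIn p f i := by
  unfold EIn
  rw [Finset.mul_sum]
  exact Finset.sum_congr rfl (fun T _ => by ring)

lemma EIn_continuous {n : ℕ} (p : Fin n → ℝ) (f : Finset (Fin n) → ℝ) (i : Fin n) :
    Continuous (fun ε : ℝ => EIn (fun j => p j + ε) f i) := by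
  unfold EIn
  apply continuous_finset_sum
  intro T _
  exact continuous_const.mul
    ((continuous_finset_prod _ (fun j _ => continuous_const.add continuous_id)).mul
     (continuous_finset_prod _ (fun j _ => continuous_const.sub
       (continuous_const.add continuous_id))))

theorem stmt16 (n : ℕ) (c : Fin n → ℝ → ℝ) (f : Fin n → Finset (Fin n) → ℝ)
    (p : Fin n → ℝ)
    (hFGN : ∀ i S, i ∉ S → f i S = 0)
    (hf01 : ∀ i S, f i S ∈ Set.Icc (0:ℝ) 1)
    (hslack : ∀ S : Finset (Fin n), ∑ i ∈ S, f i S < 1)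
    (hp : ∀ i, p i ∈ Set.Ioo (0:ℝ) 1)
    (hc_cont : ∀ i, Continuous (deriv (c i)))
    (hc_mono : ∀ i, StrictMono (deriv (c i)))
    (hc0 : ∀ i, deriv (c i) 0 = 0)
    (hfoc : ∀ i, deriv (c i) (p i) = EIn p (f i) i) :
    ∃ ε > 0, ∃ t : Fin n → ℝ, (∀ i, 0 < t i) ∧ (∀ i, p i + ε < 1) ∧
      (∀ S : Finset (Fin n), ∑ i ∈ S, t i * f i S ≤ 1) ∧
      ∀ i, deriv (c i) (p i + ε) = EIn (fun j => p j + ε) (fun S => t i * f i S) i := by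
  classical
  have hne : (Finset.univ : Finset (Finset (Fin n))).Nonempty := ⟨∅, Finset.mem_univ _⟩
  set M : ℝ := Finset.univ.sup' hne (fun S => ∑ i ∈ S, f i S) with hMdef
  have hM1 : M < 1 := by
    rw [hMdef, Finset.sup'_lt_iff]
    intro S _; exact hslack S
  have hM0 : 0 ≤ M := by
    have h : (∑ i ∈ (∅ : Finset (Fin n)), f i ∅) ≤ M :=
      Finset.le_sup' (f := fun S => ∑ i ∈ S, f i S) (Finset.mem_univ _)
    simpa using h
  set κ : ℝ := 2 / (1 + M) with hκdef
  have h1M : (0:ℝ) < 1 + M := by linarith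
  have hκ1 : 1 < κ := by
    rw [hκdef, lt_div_iff₀ h1M]; linarith
  -- positivity of EIn at the equilibrium
  have hψ0 : ∀ i, 0 < EIn p (f i) i := by
    intro i
    rw [← hfoc i]
    calc (0:ℝ) = deriv (c i) 0 := (hc0 i).symm
    _ < deriv (c i) (p i) := (hc_mono i) (hp i).1
  -- eventually statement
  have hev : ∀ᶠ ε in nhdsWithin (0:ℝ) (Set.Ioi 0),
      ∀ i, p i + ε < 1 ∧ 0 < EIn (fun j => p j + ε) (f i) i ∧
        deriv (c i) (p i + ε) / EIn (fun j => p j + ε) (f i) i < κ := by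
    rw [Filter.eventually_all]
    intro i
    apply Filter.Eventually.filter_mono nhdsWithin_le_nhds
    have htp : Filter.Tendsto (fun ε : ℝ => p i + ε) (nhds 0) (nhds (p i)) := by
      have : Filter.Tendsto (fun ε : ℝ => p i + ε) (nhds 0) (nhds (p i + 0)) :=
        (continuous_const.add continuous_id).continuousAt
      simpa using this
    have htψ : Filter.Tendsto (fun ε : ℝ => EIn (fun j => p j + ε) (f i) i) (nhds 0)
        (nhds (EIn p (f i) i)) := by
      have := (EIn_continuous p (f i) i).continuousAt (x := (0:ℝ))
      simpa [ContinuousAt] using this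
    have htφ : Filter.Tendsto (fun ε : ℝ => deriv (c i) (p i + ε)) (nhds 0)
        (nhds (deriv (c i) (p i))) := Filter.Tendsto.comp ((hc_cont i).continuousAt) htp
    have h1 : ∀ᶠ ε in nhds (0:ℝ), p i + ε < 1 := htp.eventually_lt_const (hp i).2
    have h2 : ∀ᶠ ε in nhds (0:ℝ), 0 < EIn (fun j => p j + ε) (f i) i :=
      htψ.eventually_const_lt (hψ0 i)
    have h3 : ∀ᶠ ε in nhds (0:ℝ),
        deriv (c i) (p i + ε) / EIn (fun j => p j + ε) (f i) i < κ := by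
      have hdiv : Filter.Tendsto
          (fun ε : ℝ => deriv (c i) (p i + ε) / EIn (fun j => p j + ε) (f i) i) (nhds 0)
          (nhds (deriv (c i) (p i) / EIn p (f i) i)) :=
        htφ.div htψ (ne_of_gt (hψ0 i))
      have hlim : deriv (c i) (p i) / EIn p (f i) i = 1 := by
        rw [hfoc i]; exact div_self (ne_of_gt (hψ0 i))
      rw [hlim] at hdiv
      exact hdiv.eventually_lt_const hκ1
    filter_upwards [h1, h2, h3] with ε hε1 hε2 hε3
    exact ⟨hε1, hε2, hε3⟩
  have hmem : ∀ᶠ ε in nhdsWithin (0:ℝ) (Set.Ioi 0), ε ∈ Set.Ioi (0:ℝ) :=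
    eventually_mem_nhdsWithin
  obtain ⟨ε, hεP, hεpos⟩ := (hev.and hmem).exists
  refine ⟨ε, hεpos, fun i => deriv (c i) (p i + ε) / EIn (fun j => p j + ε) (f i) i, ?_, ?_, ?_, ?_⟩
  · intro i
    have hnum : 0 < deriv (c i) (p i + ε) := by
      calc (0:ℝ) = deriv (c i) 0 := (hc0 i).symm
      _ < deriv (c i) (p i + ε) := (hc_mono i) (by have h1 := (hp i).1; have h2 : (0:ℝ) < ε := hεpos; linarith)
    exact div_pos hnum (hεP i).2.1
  · intro i; exact (hεP i).1
  · intro S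
    have hstep : ∀ i ∈ S,
        deriv (c i) (p i + ε) / EIn (fun j => p j + ε) (f i) i * f i S ≤ κ * f i S := by
      intro i _
      exact mul_le_mul_of_nonneg_right (le_of_lt (hεP i).2.2) (hf01 i S).1
    calc ∑ i ∈ S, deriv (c i) (p i + ε) / EIn (fun j => p j + ε) (f i) i * f i S
        ≤ ∑ i ∈ S, κ * f i S := Finset.sum_le_sum hstep
      _ = κ * ∑ i ∈ S, f i S := by rw [Finset.mul_sum]
      _ ≤ κ * M := by
          apply mul_le_mul_of_nonneg_left _ (le_of_lt (lt_trans zero_lt_one hκ1))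
          exact Finset.le_sup' (f := fun S => ∑ i ∈ S, f i S) (Finset.mem_univ S)
      _ ≤ 1 := by
          rw [hκdef, div_mul_eq_mul_div, div_le_one h1M]; linarith
  · intro i
    rw [EIn_smul]
    rw [div_mul_cancel₀]
    exact ne_of_gt (hεP i).2.1
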